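/- Let U ⊆ ℝⁿ be open, g : U → (ℝⁿ →ₗ ℝⁿ →ₗ ℝ) a smooth map with each g(q) a symmetric nondegenerate bilinear form, with Christoffel symbols Γˡ_{ij}, and let α : U × ℝⁿ → (ℝⁿ)* be a contact form, i.e. α(q,v)(v) = 0 for all (q,v) ∈ U × ℝⁿ. Then every twice-differentiable curve x : I → U (I ⊆ ℝ an open interval) satisfying the Newton equation (x'')ˡ(t) = −( Σ_k g^{lk}(x(t)) α_k(x(t), x'(t)) + Σ_{i,j} Γˡ_{ij}(x(t)) (x')ⁱ(t) (x')ʲ(t) ) has tangent field of constant length: the function t ↦ g(x(t))(x'(t), x'(t)) is constant on I. -/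

import Mathlib

/-- The `i`-th standard basis vector of `ℝⁿ`. -/
noncomputable def basisVec {n : ℕ} (i : Fin n) : Fin n → ℝ := Pi.single i 1

/-- The Christoffel symbols `Γˡ_{ij}(q) = (1/2) Σ_k g^{lk}(q) (∂_i g_{jk} + ∂_j g_{ik} − ∂_k g_{ij})(q)`
of a metric `g` with inverse coefficients `ginv`. -/
noncomputable def christoffel {n : ℕ}
    (g : (Fin n → ℝ) → ((Fin n → ℝ) →L[ℝ] (Fin n → ℝ) →L[ℝ] ℝ))
    (ginv : (Fin n → ℝ) → Fin n → Fin n → ℝ)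
    (l i j : Fin n) (q : Fin n → ℝ) : ℝ :=
  (1/2) * ∑ k, ginv q l k *
    (fderiv ℝ (fun p => g p (basisVec j) (basisVec k)) q (basisVec i)
      + fderiv ℝ (fun p => g p (basisVec i) (basisVec k)) q (basisVec j)
      - fderiv ℝ (fun p => g p (basisVec i) (basisVec j)) q (basisVec k))

/-! Along a solution, `E = g(x)(x', x')` has derivative `∂g[x'](x', x') + 2 g(x)(x', x'')`.
Lowering the index of the Newton equation with `g` (where `g · ginv = 1` is used) turns
`g(x)(x', x'')` into `-α(x, x')(x') - Γ_{ijk} x'ⁱ x'ʲ x'ᵏ` with `Γ_{ijk}` the Christoffel symbols of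
the first kind. The contact condition kills the first term, and the triple contraction of `Γ_{ijk}`
equals `½ ∂g[x'](x', x')`, so `E' = 0` and `E` is constant on the interval. -/

open scoped Matrix

variable {n : ℕ}

lemma sum_smul_map_basisVec {M F : Type*} [AddCommMonoid M] [Module ℝ M]
    [FunLike F (Fin n → ℝ) M] [LinearMapClass F ℝ (Fin n → ℝ) M] (f : F) (u : Fin n → ℝ) :
    ∑ i, u i • f (basisVec i) = f u := by
  conv_rhs => rw [pi_eq_sum_univ' u, map_sum]
  simp only [map_smul, basisVec]

lemma sum_sum_smul_apply_basisVec {M : Type*} [NormedAddCommGroup M] [NormedSpace ℝ M]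
    (B : (Fin n → ℝ) →L[ℝ] (Fin n → ℝ) →L[ℝ] M) (u w : Fin n → ℝ) :
    ∑ i, ∑ j, (u i * w j) • B (basisVec i) (basisVec j) = B u w := by
  rw [← sum_smul_map_basisVec B u, sum_apply]
  refine Finset.sum_congr rfl fun i _ => ?_
  rw [smul_apply, ← sum_smul_map_basisVec (B (basisVec i)) w, Finset.smul_sum]
  simp only [mul_smul]

lemma apply_eq_dotProduct_mulVec (B : (Fin n → ℝ) →L[ℝ] (Fin n → ℝ) →L[ℝ] ℝ)
    (u w : Fin n → ℝ) :
    B u w = u ⬝ᵥ (Matrix.of (fun i j => B (basisVec i) (basisVec j)) *ᵥ w) := by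
  rw [← sum_sum_smul_apply_basisVec B u w]
  simp only [dotProduct, Matrix.mulVec, Matrix.of_apply, Finset.mul_sum, smul_eq_mul]
  exact Finset.sum_congr rfl fun i _ => Finset.sum_congr rfl fun j _ => by ring

lemma fderiv_apply_apply {E F G : Type*} [NormedAddCommGroup E] [NormedSpace ℝ E]
    [NormedAddCommGroup F] [NormedSpace ℝ F] [NormedAddCommGroup G] [NormedSpace ℝ G]
    {g : E → F →L[ℝ] F →L[ℝ] G} {q : E} (hg : DifferentiableAt ℝ g q) (u w : F) (z : E) :
    fderiv ℝ (fun p => g p u w) q z = fderiv ℝ g q z u w := by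
  rw [((hg.hasFDerivAt.clm_apply (hasFDerivAt_const u q)).clm_apply
    (hasFDerivAt_const w q)).fderiv]
  simp

lemma HasDerivAt.clm_apply_apply_self {E F G : Type*} [NormedAddCommGroup E] [NormedSpace ℝ E]
    [NormedAddCommGroup F] [NormedSpace ℝ F] [NormedAddCommGroup G] [NormedSpace ℝ G]
    {g : E → F →L[ℝ] F →L[ℝ] G} {x : ℝ → E} {y : ℝ → F} {v : E} {a : F} {t : ℝ}
    (hg : DifferentiableAt ℝ g (x t)) (hx : HasDerivAt x v t) (hy : HasDerivAt y a t) :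
    HasDerivAt (fun s => g (x s) (y s) (y s))
      (fderiv ℝ g (x t) v (y t) (y t) + g (x t) a (y t) + g (x t) (y t) a) t := by
  simpa only [Function.comp_def, add_apply] using
    ((hg.hasFDerivAt.comp_hasDerivAt (l := g) t hx).clm_apply hy).clm_apply hy

section Christoffel

variable {g : (Fin n → ℝ) → ((Fin n → ℝ) →L[ℝ] (Fin n → ℝ) →L[ℝ] ℝ)} {q : Fin n → ℝ}

noncomputable def christoffelFirstKind
    (g : (Fin n → ℝ) → ((Fin n → ℝ) →L[ℝ] (Fin n → ℝ) →L[ℝ] ℝ)) (i j k : Fin n)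
    (q : Fin n → ℝ) : ℝ :=
  (1/2) * (fderiv ℝ (fun p => g p (basisVec j) (basisVec k)) q (basisVec i)
      + fderiv ℝ (fun p => g p (basisVec i) (basisVec k)) q (basisVec j)
      - fderiv ℝ (fun p => g p (basisVec i) (basisVec j)) q (basisVec k))

lemma christoffel_eq_sum_mul_christoffelFirstKind
    (ginv : (Fin n → ℝ) → Fin n → Fin n → ℝ) (l i j : Fin n) :
    christoffel g ginv l i j q = ∑ k, ginv q l k * christoffelFirstKind g i j k q := by
  simp only [christoffel, christoffelFirstKind, Finset.mul_sum]
  exact Finset.sum_congr rfl fun k _ => by ring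

lemma christoffelFirstKind_eq_fderiv (hg : DifferentiableAt ℝ g q) (i j k : Fin n) :
    christoffelFirstKind g i j k q = (1/2) * (fderiv ℝ g q (basisVec i) (basisVec j) (basisVec k)
      + fderiv ℝ g q (basisVec j) (basisVec i) (basisVec k)
      - fderiv ℝ g q (basisVec k) (basisVec i) (basisVec j)) := by
  simp only [christoffelFirstKind, fderiv_apply_apply hg]

lemma sum_sum_christoffelFirstKind_mul (hg : DifferentiableAt ℝ g q) (v : Fin n → ℝ) (k : Fin n) :
    ∑ i, ∑ j, christoffelFirstKind g i j k q * v i * v j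
      = fderiv ℝ g q v v (basisVec k) - (1/2) * fderiv ℝ g q (basisVec k) v v := by
  set T := fderiv ℝ g q
  have hT : ∑ i, ∑ j, v i * v j * T (basisVec i) (basisVec j) (basisVec k)
      = T v v (basisVec k) := by
    simpa only [sum_apply, smul_apply, smul_eq_mul] using
      congrArg (· (basisVec k)) (sum_sum_smul_apply_basisVec T v v)
  have hT_swap : ∑ i, ∑ j, v i * v j * T (basisVec j) (basisVec i) (basisVec k)
      = T v v (basisVec k) := by
    rw [Finset.sum_comm, ← hT]
    exact Finset.sum_congr rfl fun i _ => Finset.sum_congr rfl fun j _ => by ring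
  have hTk : ∑ i, ∑ j, v i * v j * T (basisVec k) (basisVec i) (basisVec j)
      = T (basisVec k) v v := by
    simpa only [smul_eq_mul] using sum_sum_smul_apply_basisVec (T (basisVec k)) v v
  calc ∑ i, ∑ j, christoffelFirstKind g i j k q * v i * v j
      = (1/2) * (∑ i, ∑ j, v i * v j * T (basisVec i) (basisVec j) (basisVec k)
          + ∑ i, ∑ j, v i * v j * T (basisVec j) (basisVec i) (basisVec k)
          - ∑ i, ∑ j, v i * v j * T (basisVec k) (basisVec i) (basisVec j)) := by
        simp only [christoffelFirstKind_eq_fderiv hg, Finset.mul_sum, ← Finset.sum_add_distrib,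
          ← Finset.sum_sub_distrib]
        exact Finset.sum_congr rfl fun i _ => Finset.sum_congr rfl fun j _ => by ring
    _ = T v v (basisVec k) - (1/2) * T (basisVec k) v v := by
        rw [hT, hT_swap, hTk]
        ring

lemma dotProduct_christoffelFirstKind_contraction (hg : DifferentiableAt ℝ g q) (v : Fin n → ℝ) :
    v ⬝ᵥ (fun k => ∑ i, ∑ j, christoffelFirstKind g i j k q * v i * v j)
      = (1/2) * fderiv ℝ g q v v v := by
  simp only [dotProduct, sum_sum_christoffelFirstKind_mul hg, mul_sub, Finset.sum_sub_distrib]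
  have h1 := sum_smul_map_basisVec (fderiv ℝ g q v v) v
  have h2 := congrArg (· v v) (sum_smul_map_basisVec (fderiv ℝ g q) v)
  simp only [sum_apply, smul_apply, smul_eq_mul] at h1 h2
  simp only [mul_left_comm (v _) (1/2 : ℝ), ← Finset.mul_sum, h1, h2]
  ring

end Christoffel

lemma apply_accel_eq_of_newton {g : (Fin n → ℝ) → ((Fin n → ℝ) →L[ℝ] (Fin n → ℝ) →L[ℝ] ℝ)}
    {ginv : (Fin n → ℝ) → Fin n → Fin n → ℝ} {q : Fin n → ℝ} (hg : DifferentiableAt ℝ g q)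
    (hginv : ∀ i j, ∑ k, g q (basisVec i) (basisVec k) * ginv q k j = if i = j then 1 else 0)
    (α : (Fin n → ℝ) →L[ℝ] ℝ) (v a : Fin n → ℝ) (hα : α v = 0)
    (ha : ∀ l, a l = -((∑ k, ginv q l k * α (basisVec k))
      + ∑ i, ∑ j, christoffel g ginv l i j q * v i * v j)) :
    g q v a = -((1/2) * fderiv ℝ g q v v v) := by
  set G := Matrix.of fun i j => g q (basisVec i) (basisVec j)
  set c : Fin n → ℝ := fun k => ∑ i, ∑ j, christoffelFirstKind g i j k q * v i * v j
  have hG : G * Matrix.of (ginv q) = 1 := by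
    ext i j
    simpa only [G, Matrix.mul_apply, Matrix.of_apply, Matrix.one_apply] using hginv i j
  have ha' : a = -(Matrix.of (ginv q) *ᵥ fun k => α (basisVec k) + c k) := by
    ext l
    rw [ha l]
    simp only [christoffel_eq_sum_mul_christoffelFirstKind, c, Pi.neg_apply, Matrix.mulVec,
      dotProduct, Matrix.of_apply, mul_add, Finset.sum_add_distrib, Finset.mul_sum, Finset.sum_mul]
    congr 2
    symm
    rw [Finset.sum_comm]
    refine Finset.sum_congr rfl fun i _ => ?_
    rw [Finset.sum_comm]
    exact Finset.sum_congr rfl fun j _ => Finset.sum_congr rfl fun k _ => by ring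
  calc g q v a = v ⬝ᵥ (G *ᵥ a) := apply_eq_dotProduct_mulVec (g q) v a
    _ = -(v ⬝ᵥ fun k => α (basisVec k) + c k) := by
        rw [ha', Matrix.mulVec_neg, Matrix.mulVec_mulVec, hG, Matrix.one_mulVec, dotProduct_neg]
    _ = -(α v + v ⬝ᵥ c) := by
        rw [← sum_smul_map_basisVec α v]
        simp [dotProduct, mul_add, Finset.sum_add_distrib]
    _ = -((1/2) * fderiv ℝ g q v v v) := by
        rw [hα, dotProduct_christoffelFirstKind_contraction hg, zero_add]

theorem contact_implies_constant_speed_general {n : ℕ} (U : Set (Fin n → ℝ)) (hU : IsOpen U)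
    (g : (Fin n → ℝ) → ((Fin n → ℝ) →L[ℝ] (Fin n → ℝ) →L[ℝ] ℝ))
    (hg : ContDiffOn ℝ (⊤ : ℕ∞) g U)
    (hsymm : ∀ q ∈ U, ∀ u w : Fin n → ℝ, g q u w = g q w u)
    (ginv : (Fin n → ℝ) → Fin n → Fin n → ℝ)
    (hginv : ∀ q ∈ U, ∀ i j : Fin n,
      (∑ k, g q (basisVec i) (basisVec k) * ginv q k j) = if i = j then 1 else 0)
    (α : (Fin n → ℝ) × (Fin n → ℝ) → ((Fin n → ℝ) →L[ℝ] ℝ))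
    (hcontact : ∀ (q : Fin n → ℝ), q ∈ U → ∀ v : Fin n → ℝ, α (q, v) v = 0)
    (I : Set ℝ) (hI' : I.OrdConnected)
    (x x' x'' : ℝ → (Fin n → ℝ))
    (hxU : ∀ t ∈ I, x t ∈ U)
    (hx' : ∀ t ∈ I, HasDerivAt x (x' t) t)
    (hx'' : ∀ t ∈ I, HasDerivAt x' (x'' t) t)
    (hNewton : ∀ t ∈ I, ∀ l : Fin n,
      x'' t l = -((∑ k, ginv (x t) l k * α (x t, x' t) (basisVec k))
        + ∑ i, ∑ j, christoffel g ginv l i j (x t) * x' t i * x' t j)) :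
    ∀ t₁ ∈ I, ∀ t₂ ∈ I,
      g (x t₁) (x' t₁) (x' t₁) = g (x t₂) (x' t₂) (x' t₂) := by
  have hderiv : ∀ t ∈ I, HasDerivAt (fun s => g (x s) (x' s) (x' s)) 0 t := by
    intro t ht
    have hxt := hxU t ht
    have hgx : DifferentiableAt ℝ g (x t) :=
      (hg.differentiableOn (by simp)).differentiableAt (hU.mem_nhds hxt)
    have hzero : fderiv ℝ g (x t) (x' t) (x' t) (x' t) + g (x t) (x'' t) (x' t)
        + g (x t) (x' t) (x'' t) = 0 := by
      rw [hsymm _ hxt (x'' t), apply_accel_eq_of_newton hgx (hginv _ hxt) _ _ _ (hcontact _ hxt _)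
        (hNewton t ht)]
      ring
    simpa only [hzero] using HasDerivAt.clm_apply_apply_self hgx (hx' t ht) (hx'' t ht)
  intro t₁ ht₁ t₂ ht₂
  have hbound := (convex_iff_ordConnected.mpr hI').norm_image_sub_le_of_norm_hasDerivWithin_le
    (fun t ht => (hderiv t ht).hasDerivWithinAt) (fun _ _ => norm_zero.le) ht₂ ht₁
  rwa [zero_mul, norm_le_zero_iff, sub_eq_zero] at hbound

/-- If `α` is a contact form (`α(q,v)(v) = 0` for all `(q,v) ∈ U × ℝⁿ`),
then every twice-differentiable curve solving the Newton equation of the mechanical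
system `(U, g, α)` has tangent field of constant length: `t ↦ g(x(t))(x'(t), x'(t))`
is constant on `I`. -/
theorem contact_implies_constant_speed {n : ℕ} (U : Set (Fin n → ℝ)) (hU : IsOpen U)
    (g : (Fin n → ℝ) → ((Fin n → ℝ) →L[ℝ] (Fin n → ℝ) →L[ℝ] ℝ))
    (hg : ContDiffOn ℝ (⊤ : ℕ∞) g U)
    (hsymm : ∀ q ∈ U, ∀ u w : Fin n → ℝ, g q u w = g q w u)
    (hnondeg : ∀ q ∈ U, ∀ u : Fin n → ℝ, (∀ w, g q u w = 0) → u = 0)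
    (ginv : (Fin n → ℝ) → Fin n → Fin n → ℝ)
    (hginv : ∀ q ∈ U, ∀ i j : Fin n,
      (∑ k, g q (basisVec i) (basisVec k) * ginv q k j) = if i = j then 1 else 0)
    (α : (Fin n → ℝ) × (Fin n → ℝ) → ((Fin n → ℝ) →L[ℝ] ℝ))
    (hcontact : ∀ (q : Fin n → ℝ), q ∈ U → ∀ v : Fin n → ℝ, α (q, v) v = 0)
    (I : Set ℝ) (hI : IsOpen I) (hI' : I.OrdConnected)
    (x x' x'' : ℝ → (Fin n → ℝ))
    (hxU : ∀ t ∈ I, x t ∈ U)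
    (hx' : ∀ t ∈ I, HasDerivAt x (x' t) t)
    (hx'' : ∀ t ∈ I, HasDerivAt x' (x'' t) t)
    (hNewton : ∀ t ∈ I, ∀ l : Fin n,
      x'' t l = -((∑ k, ginv (x t) l k * α (x t, x' t) (basisVec k))
        + ∑ i, ∑ j, christoffel g ginv l i j (x t) * x' t i * x' t j)) :
    ∀ t₁ ∈ I, ∀ t₂ ∈ I,
      g (x t₁) (x' t₁) (x' t₁) = g (x t₂) (x' t₂) (x' t₂) :=
  contact_implies_constant_speed_general U hU g hg hsymm ginv hginv α hcontact I hI' x x' x'' hxU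
    hx' hx'' hNewton
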